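/- arXiv:2409.20028 — 3 statements merged into one kernel-verified Lean document; each statement's English description precedes it below -/
import Mathlib

section
/- Let Π₁, Π₂, Π₃ be m-outcome projective measurements (PVMs) on a finite-dimensional Hilbert space H, i.e. families of self-adjoint projections summing to the identity. Then with tr the dimension-normalized trace, ∑_{a=1}^m tr(Π₁^a Π₂^a) ≥ 2 ∑_{a=1}^m tr(Π₁^a Π₃^a) + 2 ∑_{a=1}^m tr(Π₂^a Π₃^a) − 3. -/
/-- Dimension-normalized trace (real part). -/
noncomputable def ntr {d : ℕ} (A : Matrix (Fin d) (Fin d) ℂ) : ℝ :=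
  (Matrix.trace A).re / d

/-- An `m`-outcome PVM: a family of self-adjoint projections summing to the identity. -/
def IsPVM {d m : ℕ} (P : Fin m → Matrix (Fin d) (Fin d) ℂ) : Prop :=
  (∀ a, (P a).IsHermitian) ∧ (∀ a, P a * P a = P a) ∧ (∑ a, P a = 1)

lemma re_trace_sq_nonneg {d : ℕ} (A : Matrix (Fin d) (Fin d) ℂ)
    (hA : A.IsHermitian) : 0 ≤ (Matrix.trace (A * A)).re := by
  rw [show A * A = A.conjTranspose * A from by rw [hA.eq]]
  simp only [Matrix.trace, Matrix.diag, Matrix.mul_apply, Matrix.conjTranspose_apply,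
    Complex.re_sum]
  apply Finset.sum_nonneg; intro i _
  apply Finset.sum_nonneg; intro j _
  simp [Complex.mul_re]
  nlinarith [sq_nonneg (A j i).re, sq_nonneg (A j i).im]

lemma key {d : ℕ} (A B C : Matrix (Fin d) (Fin d) ℂ)
    (hA : A.IsHermitian) (hB : B.IsHermitian) (hC : C.IsHermitian) :
    (Matrix.trace ((A - B) * (A - B))).re ≤
      2 * (Matrix.trace ((A - C) * (A - C))).re +
      2 * (Matrix.trace ((C - B) * (C - B))).re := by
  have hZ : (A + B - (C + C)).IsHermitian := (hA.add hB).sub (hC.add hC)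
  have h0 := re_trace_sq_nonneg _ hZ
  have e : ∀ X Y : Matrix (Fin d) (Fin d) ℂ, Matrix.trace (Y * X) = Matrix.trace (X * Y) :=
    fun X Y => Matrix.trace_mul_comm Y X
  have hab := e A B; have hac := e A C; have hbc := e B C
  simp only [sub_mul, mul_sub, add_mul, mul_add, Matrix.trace_sub, Matrix.trace_add] at h0 ⊢
  rw [hab, hac, hbc] at *
  simp only [Complex.sub_re, Complex.add_re, ] at h0 ⊢
  linarith

lemma sum_trace_re {d m : ℕ} (P : Fin m → Matrix (Fin d) (Fin d) ℂ)
    (h : IsPVM P) : ∑ a, (Matrix.trace (P a)).re = d := by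
  rw [← Complex.re_sum, ← Matrix.trace_sum, h.2.2]
  simp [Matrix.trace_one]

lemma expand_sum {d m : ℕ} (P Q : Fin m → Matrix (Fin d) (Fin d) ℂ)
    (hP : IsPVM P) (hQ : IsPVM Q) :
    ∑ a, (Matrix.trace ((P a - Q a) * (P a - Q a))).re
      = 2 * d - 2 * ∑ a, (Matrix.trace (P a * Q a)).re := by
  have : ∀ a, (Matrix.trace ((P a - Q a) * (P a - Q a))).re
      = (Matrix.trace (P a)).re + (Matrix.trace (Q a)).re
        - 2 * (Matrix.trace (P a * Q a)).re := by
    intro a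
    have hc : Matrix.trace (Q a * P a) = Matrix.trace (P a * Q a) :=
      Matrix.trace_mul_comm _ _
    simp only [sub_mul, mul_sub, Matrix.trace_sub, hP.2.1 a, hQ.2.1 a, hc,
      Complex.sub_re]
    ring
  rw [Finset.sum_congr rfl (fun a _ => this a)]
  rw [Finset.sum_sub_distrib, Finset.sum_add_distrib, sum_trace_re P hP,
    sum_trace_re Q hQ, ← Finset.mul_sum]
  ring


/-- For three `m`-outcome PVMs on a finite-dimensional Hilbert space,
`∑_a tr(Π₁^a Π₂^a) ≥ 2 ∑_a tr(Π₁^a Π₃^a) + 2 ∑_a tr(Π₂^a Π₃^a) − 3`. -/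
theorem pvm_triangle_ineq {d m : ℕ} (hd : 0 < d)
    (P1 P2 P3 : Fin m → Matrix (Fin d) (Fin d) ℂ)
    (h1 : IsPVM P1) (h2 : IsPVM P2) (h3 : IsPVM P3) :
    (∑ a, ntr (P1 a * P2 a)) ≥
      2 * (∑ a, ntr (P1 a * P3 a)) + 2 * (∑ a, ntr (P2 a * P3 a)) - 3 := by
  have hD : (0:ℝ) < d := by exact_mod_cast hd
  set S12 := ∑ a, (Matrix.trace (P1 a * P2 a)).re with hS12
  set S13 := ∑ a, (Matrix.trace (P1 a * P3 a)).re with hS13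
  set S23 := ∑ a, (Matrix.trace (P2 a * P3 a)).re with hS23
  have hkey : ∑ a, (Matrix.trace ((P1 a - P2 a) * (P1 a - P2 a))).re ≤
      2 * ∑ a, (Matrix.trace ((P1 a - P3 a) * (P1 a - P3 a))).re +
      2 * ∑ a, (Matrix.trace ((P3 a - P2 a) * (P3 a - P2 a))).re := by
    rw [Finset.mul_sum, Finset.mul_sum, ← Finset.sum_add_distrib]
    apply Finset.sum_le_sum
    intro a _
    exact key (P1 a) (P2 a) (P3 a) (h1.1 a) (h2.1 a) (h3.1 a)
  have e32 : ∀ a, (Matrix.trace (P3 a * P2 a)).re = (Matrix.trace (P2 a * P3 a)).re := by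
    intro a; rw [Matrix.trace_mul_comm]
  rw [expand_sum P1 P2 h1 h2, expand_sum P1 P3 h1 h3, expand_sum P3 P2 h3 h2] at hkey
  simp only [e32] at hkey
  rw [← hS12, ← hS13, ← hS23] at hkey
  have hmain : 2 * S13 + 2 * S23 - 3 * d ≤ S12 := by linarith
  simp only [ntr, ← Finset.sum_div, ← hS12, ← hS13, ← hS23]
  rw [ge_iff_le, ← sub_nonneg]
  have : S12 / d - (2 * (S13 / d) + 2 * (S23 / d) - 3)
      = (S12 - (2 * S13 + 2 * S23 - 3 * d)) / d := by field_simp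
  rw [this]
  exact div_nonneg (by linarith) hD.le
end

section
/- Let α : {±1}^m → Obs(H) be a function into observables (Hermitian unitaries) on a finite-dimensional Hilbert space, with Fourier coefficients α̂(S). Define P^a = ∑_{S : a ∈ S} (1/|S|) α̂(S)² for each a ∈ [m], and Q = I − ∑_a P^a. Then each P^a is positive semidefinite, Q is positive semidefinite, and {P^1,...,P^m, Q} forms a POVM. Moreover, if α is odd (α(−x) = −α(x) for all x), then Q = 0. -/
open scoped ComplexOrder
noncomputable def sgn (b : Bool) : ℝ := if b then -1 else 1

noncomputable def chi {m : ℕ} (S : Finset (Fin m)) (x : Fin m → Bool) : ℝ :=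
  ∏ a ∈ S, sgn (x a)

/-- Operator-valued Fourier coefficient `α̂(S) = E_x[χ_S(x) α(x)]`. -/
noncomputable def fhatOp {d m : ℕ} (α : (Fin m → Bool) → Matrix (Fin d) (Fin d) ℂ)
    (S : Finset (Fin m)) : Matrix (Fin d) (Fin d) ℂ :=
  ((2 : ℝ) ^ m)⁻¹ • ∑ x : Fin m → Bool, chi S x • α x

/-- `P^a = ∑_{S : a ∈ S} (1/|S|) α̂(S)²`. -/
noncomputable def Pop {d m : ℕ} (α : (Fin m → Bool) → Matrix (Fin d) (Fin d) ℂ)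
    (a : Fin m) : Matrix (Fin d) (Fin d) ℂ :=
  ∑ S ∈ Finset.univ.filter (fun S : Finset (Fin m) => a ∈ S),
    ((S.card : ℝ))⁻¹ • (fhatOp α S * fhatOp α S)

lemma sum_chi_mul {m : ℕ} (x y : Fin m → Bool) :
    ∑ S : Finset (Fin m), chi S x * chi S y = if x = y then (2:ℝ)^m else 0 := by
  have h : ∀ S : Finset (Fin m), chi S x * chi S y = ∏ a ∈ S, (sgn (x a) * sgn (y a)) := by
    intro S; simp [chi, Finset.prod_mul_distrib]
  have h2 : ∑ S : Finset (Fin m), chi S x * chi S y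
      = ∏ a : Fin m, (sgn (x a) * sgn (y a) + 1) := by
    rw [Finset.prod_add]
    simp only [Finset.prod_const_one, mul_one]
    rw [Finset.powerset_univ]
    exact Finset.sum_congr rfl fun S _ => h S
  rw [h2]
  by_cases hxy : x = y
  · subst hxy
    simp only [if_pos rfl]
    have : ∀ a : Fin m, sgn (x a) * sgn (x a) + 1 = 2 := by
      intro a; cases x a <;> simp [sgn] <;> norm_num
    rw [Finset.prod_congr rfl (fun a _ => this a)]
    simp
  · rw [if_neg hxy]
    obtain ⟨a, ha⟩ : ∃ a, x a ≠ y a := by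
      by_contra h'; push_neg at h'; exact hxy (funext h')
    apply Finset.prod_eq_zero (Finset.mem_univ a)
    cases hx : x a <;> cases hy : y a <;> simp_all [sgn] <;> norm_num

lemma parseval {d m : ℕ} (α : (Fin m → Bool) → Matrix (Fin d) (Fin d) ℂ)
    (hunit : ∀ x, α x * α x = 1) :
    ∑ S : Finset (Fin m), fhatOp α S * fhatOp α S = 1 := by
  have key : ∀ S : Finset (Fin m), fhatOp α S * fhatOp α S
      = (((2:ℝ)^m)⁻¹ * ((2:ℝ)^m)⁻¹) •
        ∑ x : Fin m → Bool, ∑ y : Fin m → Bool, (chi S x * chi S y) • (α x * α y) := by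
    intro S
    rw [fhatOp, Matrix.smul_mul, Matrix.mul_smul, smul_smul, Finset.sum_mul_sum]
    congr 1
    refine Finset.sum_congr rfl fun x _ => Finset.sum_congr rfl fun y _ => ?_
    rw [Matrix.smul_mul, Matrix.mul_smul, smul_smul]
  rw [Finset.sum_congr rfl (fun S _ => key S), ← Finset.smul_sum]
  rw [Finset.sum_comm]
  have step : ∀ x : Fin m → Bool,
      ∑ S : Finset (Fin m), ∑ y : Fin m → Bool, (chi S x * chi S y) • (α x * α y)
      = ((2:ℝ)^m) • (1 : Matrix (Fin d) (Fin d) ℂ) := by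
    intro x
    rw [Finset.sum_comm]
    have h1 : ∀ y : Fin m → Bool,
        ∑ S : Finset (Fin m), (chi S x * chi S y) • (α x * α y)
        = (if x = y then (2:ℝ)^m else 0) • (α x * α y) := by
      intro y
      rw [← Finset.sum_smul, sum_chi_mul]
    rw [Finset.sum_congr rfl (fun y _ => h1 y)]
    simp only [ite_smul, zero_smul, Finset.sum_ite_eq, Finset.mem_univ, if_pos, hunit x]
  rw [Finset.sum_congr rfl (fun x _ => step x), Finset.sum_const]
  simp only [Finset.card_univ, Fintype.card_fun, Fintype.card_bool, Fintype.card_fin]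
  rw [← Nat.cast_smul_eq_nsmul ℝ, smul_smul, smul_smul]
  have h2 : ((2:ℝ)^m)⁻¹ * ((2:ℝ)^m)⁻¹ * (((2:ℕ)^m : ℕ):ℝ) * (2:ℝ)^m = 1 := by
    have : ((2:ℝ)^m) ≠ 0 := by positivity
    push_cast
    field_simp
  rw [h2, one_smul]

lemma fhat_herm {d m : ℕ} (α : (Fin m → Bool) → Matrix (Fin d) (Fin d) ℂ)
    (hherm : ∀ x, (α x).IsHermitian) (S : Finset (Fin m)) : (fhatOp α S).IsHermitian := by
  unfold Matrix.IsHermitian fhatOp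
  rw [Matrix.conjTranspose_smul, star_trivial, Matrix.conjTranspose_sum]
  congr 1
  refine Finset.sum_congr rfl fun x _ => ?_
  rw [Matrix.conjTranspose_smul, star_trivial, hherm x]

lemma smul_sq_psd {d : ℕ} (B : Matrix (Fin d) (Fin d) ℂ) (hB : B.IsHermitian)
    {c : ℝ} (hc : 0 ≤ c) : (c • (B * B)).PosSemidef := by
  have h := Matrix.posSemidef_conjTranspose_mul_self ((Real.sqrt c : ℝ) • B)
  have heq : ((Real.sqrt c : ℝ) • B).conjTranspose * ((Real.sqrt c : ℝ) • B) = c • (B * B) := by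
    rw [Matrix.conjTranspose_smul, star_trivial, hB, Matrix.smul_mul, Matrix.mul_smul,
      smul_smul, Real.mul_self_sqrt hc]
  rwa [heq] at h

lemma psd_sum {d : ℕ} {ι : Type*} (s : Finset ι) (f : ι → Matrix (Fin d) (Fin d) ℂ)
    (h : ∀ i ∈ s, (f i).PosSemidef) : (∑ i ∈ s, f i).PosSemidef := by
  classical
  induction s using Finset.induction_on with
  | empty => simpa using Matrix.PosSemidef.zero
  | insert _ _ hx ih =>
    rw [Finset.sum_insert hx]
    exact (h _ (Finset.mem_insert_self _ _)).add
      (ih fun i hi => h i (Finset.mem_insert_of_mem hi))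

lemma sum_Pop {d m : ℕ} (α : (Fin m → Bool) → Matrix (Fin d) (Fin d) ℂ) :
    ∑ a, Pop α a
      = ∑ S ∈ Finset.univ.filter (fun S : Finset (Fin m) => ¬ S = ∅),
          fhatOp α S * fhatOp α S := by
  unfold Pop
  simp only [Finset.sum_filter]
  rw [Finset.sum_comm]
  refine Finset.sum_congr rfl fun S _ => ?_
  by_cases hS : S = ∅
  · simp [hS]
  · rw [if_pos hS]
    have : ∑ a : Fin m, (if a ∈ S then ((S.card : ℝ))⁻¹ • (fhatOp α S * fhatOp α S) else 0)
        = S.card • (((S.card : ℝ))⁻¹ • (fhatOp α S * fhatOp α S)) := by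
      rw [Finset.sum_ite_mem, Finset.univ_inter, Finset.sum_const]
    rw [this, ← Nat.cast_smul_eq_nsmul ℝ, smul_smul, mul_inv_cancel₀, one_smul]
    exact_mod_cast Finset.card_ne_zero.mpr (Finset.nonempty_iff_ne_empty.mpr hS)

/-- the operators `P^a` and `Q = I − ∑_a P^a` are positive semidefinite,
hence `{P^1,…,P^m,Q}` is a POVM; and if `α` is odd then `Q = 0`. -/
theorem povm_from_observables {d m : ℕ}
    (α : (Fin m → Bool) → Matrix (Fin d) (Fin d) ℂ)
    (hherm : ∀ x, (α x).IsHermitian)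
    (hunit : ∀ x, α x * α x = 1) :
    (∀ a, (Pop α a).PosSemidef) ∧
    (1 - ∑ a, Pop α a).PosSemidef ∧
    ((∑ a, Pop α a) + (1 - ∑ a, Pop α a) = 1) ∧
    ((∀ x, α (fun i => !(x i)) = -α x) → 1 - ∑ a, Pop α a = 0) := by
  have hQ : 1 - ∑ a, Pop α a = fhatOp α ∅ * fhatOp α ∅ := by
    have hsplit := Finset.sum_filter_add_sum_filter_not Finset.univ
      (fun S : Finset (Fin m) => S = ∅) (fun S => fhatOp α S * fhatOp α S)
    have h1 : ∑ S ∈ Finset.univ.filter (fun S : Finset (Fin m) => S = ∅),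
        fhatOp α S * fhatOp α S = fhatOp α ∅ * fhatOp α ∅ := by
      rw [Finset.filter_eq']
      simp
    rw [sum_Pop, sub_eq_iff_eq_add, ← parseval α hunit, ← hsplit, h1]
  refine ⟨fun a => ?_, ?_, ?_, ?_⟩
  · exact psd_sum _ _ fun S _ => smul_sq_psd _ (fhat_herm α hherm S) (by positivity)
  · rw [hQ]
    have h := Matrix.posSemidef_conjTranspose_mul_self (fhatOp α ∅)
    rwa [fhat_herm α hherm ∅] at h
  · abel
  · intro hodd
    have hinv : Function.Involutive (fun x : Fin m → Bool => fun i => !(x i)) := by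
      intro x; funext i; simp
    have he : ∑ x : Fin m → Bool, α (fun i => !(x i)) = ∑ x : Fin m → Bool, α x :=
      Fintype.sum_equiv (hinv.toPerm _) _ _ (fun x => rfl)
    have hneg : ∑ x : Fin m → Bool, α x = -∑ x : Fin m → Bool, α x := by
      conv_lhs => rw [← he]
      rw [Finset.sum_congr rfl (fun x _ => hodd x), Finset.sum_neg_distrib]
    have hsum0 : ∑ x : Fin m → Bool, α x = 0 := by
      have h2 : (2 : ℂ) • (∑ x : Fin m → Bool, α x) = 0 := by
        rw [two_smul]
        rw [eq_neg_iff_add_eq_zero] at hneg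
        exact hneg
      have := smul_eq_zero.mp h2
      simpa using this
    have hf0 : fhatOp α (∅ : Finset (Fin m)) = 0 := by
      unfold fhatOp
      simp [chi, hsum0]
    rw [hQ, hf0, mul_zero]
end

section
/- Let P = {P^1,...,P^m} be a self-commuting POVM on a finite-dimensional Hilbert space H (all P^a pairwise commute). Then there exist finitely many PVMs Π₁,...,Π_N on H whose convex hull contains P; moreover every operator M on H that commutes with all P^a also commutes with every operator of every Π_i. (Projectivization Lemma) -/
open scoped ComplexOrder

open Matrix Polynomial

variable {d : ℕ}

noncomputable def conjHom (U : Matrix (Fin d) (Fin d) ℂ)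
    (h1 : U * star U = 1) (h2 : star U * U = 1) :
    Matrix (Fin d) (Fin d) ℂ →ₐ[ℂ] Matrix (Fin d) (Fin d) ℂ where
  toFun A := U * A * star U
  map_one' := by show U * 1 * star U = 1; rw [mul_one, h1]
  map_mul' A B := by
    show U * (A * B) * star U = (U * A * star U) * (U * B * star U)
    calc U * (A * B) * star U = (U * A) * (star U * U) * (B * star U) := by
          rw [h2]; noncomm_ring
      _ = (U * A * star U) * (U * B * star U) := by noncomm_ring
  map_zero' := by show U * 0 * star U = 0; simp
  map_add' A B := by show U * (A + B) * star U = _; noncomm_ring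
  commutes' r := by
    show U * algebraMap ℂ _ r * star U = algebraMap ℂ _ r
    simp only [Algebra.algebraMap_eq_smul_one]
    rw [Matrix.mul_smul, mul_one, Matrix.smul_mul, h1]

theorem spectral_package (A : Matrix (Fin d) (Fin d) ℂ) (hA : A.PosSemidef) :
    ∃ (spec : Finset ℝ) (F : ℝ → Matrix (Fin d) (Fin d) ℂ),
      (∀ t ∈ spec, 0 ≤ t) ∧
      (∀ t s, F t * F s = if t = s then F t else 0) ∧
      (∑ t ∈ spec, F t = 1) ∧
      (∑ t ∈ spec, (t : ℂ) • F t = A) ∧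
      (∀ t, (F t).conjTranspose = F t) ∧
      (∀ t ∈ spec, ∃ p : Polynomial ℂ, F t = aeval A p) := by
  classical
  have hH : A.IsHermitian := hA.1
  set U : Matrix (Fin d) (Fin d) ℂ := (hH.eigenvectorUnitary : Matrix (Fin d) (Fin d) ℂ) with hU
  have h1 : U * star U = 1 := Matrix.mem_unitaryGroup_iff.mp hH.eigenvectorUnitary.2
  have h2 : star U * U = 1 := Matrix.mem_unitaryGroup_iff'.mp hH.eigenvectorUnitary.2
  set c : Matrix (Fin d) (Fin d) ℂ →ₐ[ℂ] Matrix (Fin d) (Fin d) ℂ := conjHom U h1 h2 with hc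
  set ev : Fin d → ℝ := hH.eigenvalues with hev
  set dg : (Fin d → ℂ) →ₐ[ℂ] Matrix (Fin d) (Fin d) ℂ := Matrix.diagonalAlgHom ℂ with hdg
  have hdgapp : ∀ v, dg v = Matrix.diagonal v := fun v => rfl
  have hcapp : ∀ B, c B = U * B * star U := fun B => rfl
  have hst : A = c (dg (fun k => (ev k : ℂ))) := by
    have := hH.spectral_theorem
    rw [Unitary.conjStarAlgAut_apply] at this
    rw [hcapp, hdgapp]
    exact this
  set spec : Finset ℝ := Finset.image ev Finset.univ with hspec
  set ind : ℝ → Fin d → ℂ := fun t k => if ev k = t then (1:ℂ) else 0 with hind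
  refine ⟨spec, fun t => c (dg (ind t)), ?_, ?_, ?_, ?_, ?_, ?_⟩
  · rintro t ht
    obtain ⟨k, -, rfl⟩ := Finset.mem_image.mp ht
    exact hA.eigenvalues_nonneg k
  · intro t s
    show c (dg (ind t)) * c (dg (ind s)) = if t = s then c (dg (ind t)) else 0
    rw [← _root_.map_mul, ← _root_.map_mul]
    have hmul : ind t * ind s = if t = s then ind t else 0 := by
      by_cases hts : t = s
      · subst hts; rw [if_pos rfl]; funext k
        show (if ev k = t then (1:ℂ) else 0) * (if ev k = t then (1:ℂ) else 0)
          = (if ev k = t then (1:ℂ) else 0)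
        split_ifs <;> simp
      · rw [if_neg hts]; funext k
        show (if ev k = t then (1:ℂ) else 0) * (if ev k = s then (1:ℂ) else 0) = 0
        by_cases h : ev k = t
        · rw [if_pos h, if_neg (fun h' => hts (h.symm.trans h')), mul_zero]
        · rw [if_neg h, zero_mul]
    rw [hmul]
    split_ifs <;> simp
  · show ∑ t ∈ spec, c (dg (ind t)) = 1
    rw [← _root_.map_sum, ← _root_.map_sum]
    have : ∑ t ∈ spec, ind t = 1 := by
      funext k
      simp only [Finset.sum_apply, hind, Pi.one_apply]
      rw [Finset.sum_ite_eq spec (ev k) (fun _ => (1:ℂ))]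
      simp [hspec]
    rw [this, _root_.map_one, _root_.map_one]
  · show ∑ t ∈ spec, (t:ℂ) • c (dg (ind t)) = A
    have hsm : ∀ t : ℝ, (t:ℂ) • c (dg (ind t)) = c (dg ((t:ℂ) • ind t)) := by
      intro t; rw [_root_.map_smul, _root_.map_smul]
    simp_rw [hsm]
    rw [← _root_.map_sum, ← _root_.map_sum, hst]
    congr 2
    funext k
    simp only [Finset.sum_apply, Pi.smul_apply, hind, smul_eq_mul, mul_ite, mul_one, mul_zero]
    rw [Finset.sum_ite_eq spec (ev k) (fun t => (t:ℂ))]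
    simp [hspec]
  · intro t
    show (c (dg (ind t)))ᴴ = c (dg (ind t))
    rw [hcapp, hdgapp]
    rw [Matrix.conjTranspose_mul, Matrix.conjTranspose_mul, Matrix.diagonal_conjTranspose]
    have : star (ind t) = ind t := by
      funext k; simp only [hind, Pi.star_apply]; split_ifs <;> simp
    rw [this, ← Matrix.star_eq_conjTranspose, ← Matrix.star_eq_conjTranspose, star_star, mul_assoc]
  · intro t ht
    set p : Polynomial ℂ :=
      ∏ s ∈ spec.erase t, (Polynomial.C ((t:ℂ) - (s:ℂ))⁻¹ * (Polynomial.X - Polynomial.C (s:ℂ))) with hp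
    refine ⟨p, ?_⟩
    have key : (Polynomial.aeval (fun k => ((ev k : ℂ)))) p = ind t := by
      funext k
      have hk : (Polynomial.aeval (fun k => ((ev k : ℂ)))) p k
          = Polynomial.aeval ((ev k : ℂ)) p :=
        (Polynomial.aeval_algHom_apply (Pi.evalAlgHom ℂ (fun _ => ℂ) k) _ _).symm
      rw [hk, congrFun (Polynomial.coe_aeval_eq_eval ((ev k : ℂ))) p]
      show Polynomial.eval ((ev k : ℂ)) p = ind t k
      rw [hp, Polynomial.eval_prod]
      simp only [Polynomial.eval_mul, Polynomial.eval_C, Polynomial.eval_sub, Polynomial.eval_X]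
      by_cases hkt : ev k = t
      · rw [hind]; simp only [hkt, if_pos rfl]
        apply Finset.prod_eq_one
        intro s hs
        have hst' : s ≠ t := Finset.ne_of_mem_erase hs
        have hne' : ((t:ℂ)) ≠ ((s:ℂ)) := by exact_mod_cast (Ne.symm hst')
        exact inv_mul_cancel₀ (sub_ne_zero.mpr hne')
      · rw [hind]; simp only [if_neg hkt]
        apply Finset.prod_eq_zero (i := ev k)
        · exact Finset.mem_erase.mpr ⟨by exact_mod_cast hkt,
            Finset.mem_image_of_mem ev (Finset.mem_univ k)⟩
        · simp
    show c (dg (ind t)) = Polynomial.aeval A p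
    rw [hst, Polynomial.aeval_algHom_apply, Polynomial.aeval_algHom_apply, key]

set_option maxHeartbeats 1600000 in
set_option synthInstance.maxHeartbeats 400000 in
/-- Projectivization Lemma: a self-commuting POVM `P` on a finite-dimensional
Hilbert space is a convex combination of finitely many PVMs `Π₁,…,Π_N`; moreover any operator
commuting with every `P^a` commutes with every operator of every `Π_i`. -/
theorem projectivization {d m : ℕ}
    (P : Fin m → Matrix (Fin d) (Fin d) ℂ)
    (hpsd : ∀ a, (P a).PosSemidef) (hsum : ∑ a, P a = 1)
    (hself : ∀ a b, Commute (P a) (P b)) :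
    ∃ (N : ℕ) (Pi' : Fin N → Fin m → Matrix (Fin d) (Fin d) ℂ) (w : Fin N → ℝ),
      (∀ i, 0 ≤ w i) ∧ (∑ i, w i = 1) ∧
      (∀ i, IsPVM (Pi' i)) ∧
      (∀ a, P a = ∑ i, w i • Pi' i a) ∧
      (∀ M : Matrix (Fin d) (Fin d) ℂ,
        (∀ a, Commute M (P a)) → ∀ i a, Commute M (Pi' i a)) := by
  classical
  choose spec F hnn horth hsumF hrep hherm hpoly using
    fun a => spectral_package (P a) (hpsd a)
  set Asub : Subalgebra ℂ (Matrix (Fin d) (Fin d) ℂ) := Algebra.adjoin ℂ (Set.range P) with hAsub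
  letI : CommRing ↥Asub := Algebra.adjoinCommRingOfComm ℂ (by
    rintro x ⟨a, rfl⟩ y ⟨b, rfl⟩; exact hself a b)
  have hPmem : ∀ a, P a ∈ Asub := fun a => Algebra.subset_adjoin ⟨a, rfl⟩
  have hFmem : ∀ a t, t ∈ spec a → F a t ∈ Asub := by
    intro a t ht
    obtain ⟨p, hp⟩ := hpoly a t ht
    rw [hp]
    exact Algebra.adjoin_mono (Set.singleton_subset_iff.mpr (Set.mem_range_self a))
      (Polynomial.aeval_mem_adjoin_singleton ℂ (P a))
  set F' : Fin m → ℝ → ↥Asub := fun a t => if h : t ∈ spec a then ⟨F a t, hFmem a t h⟩ else 0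
    with hF'
  set P' : Fin m → ↥Asub := fun a => ⟨P a, hPmem a⟩ with hP'
  have hFval : ∀ a t, t ∈ spec a → ((F' a t : ↥Asub) : Matrix (Fin d) (Fin d) ℂ) = F a t := by
    intro a t ht; simp only [hF', dif_pos ht]
  have hFval0 : ∀ a t, t ∉ spec a → F' a t = 0 := by
    intro a t ht; simp only [hF', dif_neg ht]
  -- orthogonality at subalgebra level
  have horth' : ∀ a t s, F' a t * F' a s = if t = s then F' a t else 0 := by
    intro a t s
    by_cases ht : t ∈ spec a
    · by_cases hs : s ∈ spec a
      · apply Subtype.ext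
        have h1 : ((F' a t * F' a s : ↥Asub) : Matrix (Fin d) (Fin d) ℂ) = F a t * F a s := by
          rw [MulMemClass.coe_mul, hFval a t ht, hFval a s hs]
        rw [h1, horth a t s]
        split_ifs with h
        · subst h; rw [hFval a t ht]
        · simp
      · rw [hFval0 a s hs, mul_zero, if_neg (by rintro rfl; exact hs ht)]
    · rw [hFval0 a t ht, zero_mul]
      split_ifs <;> rfl
  have hsumF' : ∀ a, ∑ t ∈ spec a, F' a t = 1 := by
    intro a
    apply Subtype.ext
    rw [AddSubmonoidClass.coe_finset_sum]
    rw [Finset.sum_congr rfl (fun t ht => hFval a t ht), hsumF a]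
    rfl
  have hrep' : ∀ a, ∑ t ∈ spec a, (t : ℂ) • F' a t = P' a := by
    intro a
    apply Subtype.ext
    rw [AddSubmonoidClass.coe_finset_sum]
    have : ∀ t ∈ spec a, (((t : ℂ) • F' a t : ↥Asub) : Matrix (Fin d) (Fin d) ℂ)
        = (t : ℂ) • F a t := by
      intro t ht
      rw [Subalgebra.coe_smul, hFval a t ht]
    rw [Finset.sum_congr rfl this, hrep a]
  have hsumP' : ∑ a, P' a = 1 := by
    apply Subtype.ext
    rw [AddSubmonoidClass.coe_finset_sum]
    simp only [hP']
    rw [hsum]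
    exact (OneMemClass.coe_one _).symm
  -- joint projections
  set E' : (Fin m → ℝ) → ↥Asub := fun lam => ∏ a, F' a (lam a) with hE'
  set piF : Finset (Fin m → ℝ) := Fintype.piFinset spec with hpiF
  have key1 : ∑ lam ∈ piF, E' lam = 1 := by
    rw [hpiF, ← Finset.prod_univ_sum spec (fun a t => F' a t)]
    rw [Finset.prod_congr rfl (fun a _ => hsumF' a), Finset.prod_const_one]
  have keyOrth : ∀ lam mu, lam ≠ mu → E' lam * E' mu = 0 := by
    intro lam mu hne
    rw [hE']
    rw [← Finset.prod_mul_distrib]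
    obtain ⟨a, ha⟩ := Function.ne_iff.mp hne
    apply Finset.prod_eq_zero (Finset.mem_univ a)
    rw [horth', if_neg ha]
  have keyIdem : ∀ lam, E' lam * E' lam = E' lam := by
    intro lam
    rw [hE', ← Finset.prod_mul_distrib]
    exact Finset.prod_congr rfl (fun a _ => by rw [horth', if_pos rfl])
  have keyMul : ∀ (a : Fin m) lam, lam ∈ piF → P' a * E' lam = ((lam a : ℂ)) • E' lam := by
    intro a lam hmem
    have hlam : ∀ b, lam b ∈ spec b := Fintype.mem_piFinset.mp hmem
    rw [← hrep' a, Finset.sum_mul]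
    have hterm : ∀ t ∈ spec a, ((t : ℂ) • F' a t) * E' lam
        = if t = lam a then (t : ℂ) • E' lam else 0 := by
      intro t ht
      have hE : F' a t * E' lam = if t = lam a then E' lam else 0 := by
        simp only [hE']
        rw [← Finset.mul_prod_erase Finset.univ (fun b => F' b (lam b)) (Finset.mem_univ a),
          ← mul_assoc, horth' a t (lam a)]
        split_ifs with h
        · subst h; rfl
        · rw [zero_mul]
      rw [smul_mul_assoc ((t : ℂ)) (F' a t) (E' lam), hE]
      split_ifs with h
      · rfl
      · rw [smul_zero]
    rw [Finset.sum_congr rfl hterm, Finset.sum_ite_eq' (spec a) (lam a)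
      (fun t => (t : ℂ) • E' lam), if_pos (hlam a)]
  have key4 : ∀ lam ∈ piF, E' lam ≠ 0 → (∑ a, lam a) = 1 := by
    intro lam hmem hne
    have h1 : (∑ a, ((lam a : ℂ))) • E' lam = E' lam := by
      rw [Finset.sum_smul, Finset.sum_congr rfl (fun a _ => (keyMul a lam hmem).symm),
        ← Finset.sum_mul, hsumP', one_mul]
    have h2 : ((∑ a, (lam a : ℂ)) - 1) • E' lam = 0 := by
      rw [sub_smul, one_smul, h1, sub_self]
    have h3 : ((∑ a, (lam a : ℂ)) - 1) = 0 ∨ E' lam = 0 := by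
      have := congrArg (fun x : ↥Asub => (x : Matrix (Fin d) (Fin d) ℂ)) h2
      simp only [Subalgebra.coe_smul, ZeroMemClass.coe_zero] at this
      rcases smul_eq_zero.mp this with h | h
      · exact Or.inl h
      · exact Or.inr (Subtype.ext (by rw [h]; rfl))
    rcases h3 with h | h
    · have : (∑ a, (lam a : ℂ)) = 1 := by linear_combination h
      have := this
      push_cast at this
      exact_mod_cast this
    · exact absurd h hne
  -- the joint spectrum
  set S : Finset (Fin m → ℝ) := piF.filter (fun lam => E' lam ≠ 0) with hS
  have hSsum1 : ∀ lam : {x // x ∈ S}, ∑ a, lam.1 a = 1 := by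
    intro lam
    obtain ⟨h1, h2⟩ := Finset.mem_filter.mp lam.2
    exact key4 lam.1 h1 h2
  have hSnn : ∀ (lam : {x // x ∈ S}) (a : Fin m), 0 ≤ lam.1 a := by
    intro lam a
    obtain ⟨h1, -⟩ := Finset.mem_filter.mp lam.2
    exact hnn a _ (Fintype.mem_piFinset.mp h1 a)
  have hSpiF : ∀ lam : {x // x ∈ S}, lam.1 ∈ piF := fun lam => (Finset.mem_filter.mp lam.2).1
  have sumES : ∑ lam ∈ S, E' lam = 1 := by
    rw [hS, Finset.sum_filter_ne_zero]; exact key1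
  -- index type
  set ι := ({x // x ∈ S} → Fin m) with hι
  set N := Fintype.card ι with hN
  set e : Fin N ≃ ι := (Fintype.equivFin ι).symm with he
  set Qsub : ι → Fin m → ↥Asub :=
    fun f a => ∑ lam : {x // x ∈ S}, if f lam = a then E' lam.1 else 0 with hQsub
  set Pi' : Fin N → Fin m → Matrix (Fin d) (Fin d) ℂ :=
    fun i a => ((Qsub (e i) a : ↥Asub) : Matrix (Fin d) (Fin d) ℂ) with hPi'
  set w : Fin N → ℝ := fun i => ∏ lam : {x // x ∈ S}, lam.1 (e i lam) with hw
  -- scalar lemma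
  have hscalar : ∀ (mu : {x // x ∈ S}) (a : Fin m),
      ∑ f : ι, (if f mu = a then ∏ lam : {x // x ∈ S}, lam.1 (f lam) else 0) = mu.1 a := by
    intro mu a
    set h : {x // x ∈ S} → Fin m → ℝ :=
      fun lam b => if lam = mu then (if b = a then lam.1 b else 0) else lam.1 b with hh
    have hterm : ∀ f : ι, (if f mu = a then ∏ lam : {x // x ∈ S}, lam.1 (f lam) else 0)
        = ∏ lam : {x // x ∈ S}, h lam (f lam) := by
      intro f
      by_cases hfmu : f mu = a
      · rw [if_pos hfmu]
        refine Finset.prod_congr rfl (fun lam _ => ?_)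
        by_cases hlm : lam = mu
        · subst hlm; simp only [hh, if_pos rfl, if_pos hfmu]
        · simp only [hh, if_neg hlm]
      · rw [if_neg hfmu]
        symm
        apply Finset.prod_eq_zero (Finset.mem_univ mu)
        simp only [hh, if_pos rfl, if_neg hfmu]
    rw [Finset.sum_congr rfl (fun f _ => hterm f)]
    have hps := Finset.prod_univ_sum (fun _ : {x // x ∈ S} => (Finset.univ : Finset (Fin m))) h
    rw [Fintype.piFinset_univ] at hps
    rw [← hps]
    have hinner : ∀ lam : {x // x ∈ S},
        ∑ b, h lam b = if lam = mu then mu.1 a else 1 := by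
      intro lam
      by_cases hlm : lam = mu
      · subst hlm
        rw [if_pos rfl]
        simp only [hh, if_pos rfl]
        rw [Finset.sum_ite_eq' Finset.univ a (fun b => lam.1 b)]
        simp
      · rw [if_neg hlm]
        simp only [hh, if_neg hlm]
        exact hSsum1 lam
    rw [Finset.prod_congr rfl (fun lam _ => hinner lam),
      Finset.prod_ite_eq' Finset.univ mu (fun _ => mu.1 a), if_pos (Finset.mem_univ mu)]
  -- weighted expansion over piF
  have keyW : ∀ a, ∑ lam ∈ piF, ((lam a : ℂ)) • E' lam = P' a := by
    intro a
    have hps := Finset.prod_univ_sum spec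
      (fun b t => if b = a then (t : ℂ) • F' b t else F' b t)
    have h1 : ∀ b, (∑ t ∈ spec b, if b = a then (t : ℂ) • F' b t else F' b t)
        = if b = a then P' b else 1 := by
      intro b
      by_cases hba : b = a
      · simp only [if_pos hba]; exact hrep' b
      · simp only [if_neg hba]; exact hsumF' b
    have h2 : ∀ lam ∈ piF,
        (∏ b, if b = a then ((lam b : ℂ)) • F' b (lam b) else F' b (lam b))
          = ((lam a : ℂ)) • E' lam := by
      intro lam _
      rw [← Finset.mul_prod_erase Finset.univ
        (fun b => if b = a then ((lam b : ℂ)) • F' b (lam b) else F' b (lam b))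
        (Finset.mem_univ a)]
      rw [if_pos rfl]
      rw [Finset.prod_congr rfl
        (fun b hb => if_neg (Finset.ne_of_mem_erase hb))]
      rw [smul_mul_assoc ((lam a : ℂ)) (F' a (lam a)) _]
      rw [Finset.mul_prod_erase Finset.univ (fun b => F' b (lam b)) (Finset.mem_univ a)]
    calc ∑ lam ∈ piF, ((lam a : ℂ)) • E' lam
        = ∑ lam ∈ piF, ∏ b, (if b = a then ((lam b : ℂ)) • F' b (lam b) else F' b (lam b)) :=
          (Finset.sum_congr rfl (fun lam hl => (h2 lam hl).symm))
      _ = ∏ b, ∑ t ∈ spec b, (if b = a then (t : ℂ) • F' b t else F' b t) := hps.symm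
      _ = ∏ b, (if b = a then P' b else 1) := Finset.prod_congr rfl (fun b _ => h1 b)
      _ = P' a := by
          rw [Finset.prod_ite_eq' Finset.univ a (fun b => P' b), if_pos (Finset.mem_univ a)]
  -- decomposition over the PVM index
  have keyDecomp : ∀ a, ∑ f : ι,
      ((∏ lam : {x // x ∈ S}, lam.1 (f lam) : ℝ) : ℂ) • Qsub f a = P' a := by
    intro a
    have step1 : ∀ f : ι, ((∏ lam : {x // x ∈ S}, lam.1 (f lam) : ℝ) : ℂ) • Qsub f a
        = ∑ mu : {x // x ∈ S},
            (if f mu = a then ((∏ lam : {x // x ∈ S}, lam.1 (f lam) : ℝ) : ℂ) else 0)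
              • E' mu.1 := by
      intro f
      simp only [hQsub]
      rw [Finset.smul_sum]
      refine Finset.sum_congr rfl (fun mu _ => ?_)
      split_ifs with hc
      · rfl
      · rw [smul_zero, zero_smul]
    rw [Finset.sum_congr rfl (fun f _ => step1 f), Finset.sum_comm]
    have step2 : ∀ mu : {x // x ∈ S},
        (∑ f : ι, (if f mu = a then ((∏ lam : {x // x ∈ S}, lam.1 (f lam) : ℝ) : ℂ) else 0)
            • E' mu.1)
        = ((mu.1 a : ℂ)) • E' mu.1 := by
      intro mu
      rw [← Finset.sum_smul]
      congr 1
      have : (∑ f : ι, if f mu = a then ((∏ lam : {x // x ∈ S}, lam.1 (f lam) : ℝ) : ℂ) else 0)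
          = ((∑ f : ι, if f mu = a then (∏ lam : {x // x ∈ S}, lam.1 (f lam) : ℝ) else 0 : ℝ) : ℂ) := by
        push_cast
        refine Finset.sum_congr rfl (fun f _ => ?_)
        split_ifs <;> simp
      rw [this, hscalar mu a]
    rw [Finset.sum_congr rfl (fun mu _ => step2 mu)]
    have : ∑ mu : {x // x ∈ S}, ((mu.1 a : ℂ)) • E' mu.1
        = ∑ mu ∈ S, ((mu a : ℂ)) • E' mu := Finset.sum_coe_sort S (fun mu => ((mu a : ℂ)) • E' mu)
    rw [this, hS, Finset.sum_filter_of_ne (fun lam _ hne => ?_), keyW a]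
    intro h0
    rw [h0, smul_zero] at hne
    exact hne rfl
  -- hermiticity of E
  have hermF' : ∀ a t, (((F' a t : ↥Asub) : Matrix (Fin d) (Fin d) ℂ))ᴴ = F' a t := by
    intro a t
    by_cases h : t ∈ spec a
    · rw [hFval a t h]; exact hherm a t
    · rw [hFval0 a t h]; simp
  have hcommval : ∀ x y : ↥Asub, ((x : Matrix (Fin d) (Fin d) ℂ)) * y = (y : Matrix (Fin d) (Fin d) ℂ) * x := by
    intro x y
    rw [← MulMemClass.coe_mul, mul_comm x y, MulMemClass.coe_mul]
  have hermE : ∀ lam, (((E' lam : ↥Asub) : Matrix (Fin d) (Fin d) ℂ))ᴴ = E' lam := by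
    intro lam
    simp only [hE']
    induction (Finset.univ : Finset (Fin m)) using Finset.induction_on with
    | empty => simp
    | insert b s' ha ih =>
      rw [Finset.prod_insert ha, MulMemClass.coe_mul, Matrix.conjTranspose_mul, ih, hermF',
        hcommval]
  -- assemble
  refine ⟨N, Pi', w, ?_, ?_, ?_, ?_, ?_⟩
  · intro i
    exact Finset.prod_nonneg (fun lam _ => hSnn lam (e i lam))
  · rw [hw]
    have := Equiv.sum_comp e (fun f : ι => ∏ lam : {x // x ∈ S}, lam.1 (f lam))
    rw [this]
    have hps := Finset.prod_univ_sum (fun _ : {x // x ∈ S} => (Finset.univ : Finset (Fin m)))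
      (fun lam b => lam.1 b)
    rw [Fintype.piFinset_univ] at hps
    rw [← hps]
    rw [Finset.prod_congr rfl (fun lam _ => hSsum1 lam), Finset.prod_const_one]
  · intro i
    refine ⟨?_, ?_, ?_⟩
    · intro a
      show (Pi' i a)ᴴ = Pi' i a
      simp only [hPi', hQsub]
      rw [AddSubmonoidClass.coe_finset_sum, Matrix.conjTranspose_sum]
      refine Finset.sum_congr rfl (fun mu _ => ?_)
      rw [apply_ite (fun x : ↥Asub => (x : Matrix (Fin d) (Fin d) ℂ))]
      split_ifs with hc
      · exact hermE mu.1
      · simp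
    · intro a
      have idem : Qsub (e i) a * Qsub (e i) a = Qsub (e i) a := by
        simp only [hQsub]
        rw [Finset.sum_mul_sum]
        have inner : ∀ mu : {x // x ∈ S},
            (∑ nu : {x // x ∈ S}, (if (e i) mu = a then E' mu.1 else 0) *
              (if (e i) nu = a then E' nu.1 else 0))
            = (if (e i) mu = a then E' mu.1 else 0) := by
          intro mu
          rw [Finset.sum_eq_single mu]
          · split_ifs with hc
            · exact keyIdem mu.1
            · simp
          · intro nu _ hnu
            by_cases h1 : (e i) mu = a
            · by_cases h2 : (e i) nu = a
              · rw [if_pos h1, if_pos h2]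
                exact keyOrth mu.1 nu.1 (fun hh => hnu (Subtype.ext hh).symm)
              · rw [if_neg h2, mul_zero]
            · rw [if_neg h1, zero_mul]
          · intro hmu; exact absurd (Finset.mem_univ mu) hmu
        exact Finset.sum_congr rfl (fun mu _ => inner mu)
      show Pi' i a * Pi' i a = Pi' i a
      simp only [hPi']
      rw [← MulMemClass.coe_mul, idem]
    · show ∑ a, Pi' i a = 1
      simp only [hPi']
      rw [← AddSubmonoidClass.coe_finset_sum]
      have : ∑ a, Qsub (e i) a = 1 := by
        simp only [hQsub]
        rw [Finset.sum_comm]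
        have : ∀ mu : {x // x ∈ S},
            ∑ a, (if (e i) mu = a then E' mu.1 else 0) = E' mu.1 := by
          intro mu
          rw [Finset.sum_ite_eq Finset.univ ((e i) mu) (fun _ => E' mu.1),
            if_pos (Finset.mem_univ _)]
        rw [Finset.sum_congr rfl (fun mu _ => this mu)]
        rw [Finset.sum_coe_sort S (fun mu => E' mu), sumES]
      rw [this]
      rfl
  · intro a
    have hval := congrArg (fun x : ↥Asub => (x : Matrix (Fin d) (Fin d) ℂ)) (keyDecomp a)
    rw [AddSubmonoidClass.coe_finset_sum] at hval
    have hsmul : ∀ f : ι, ((((∏ lam : {x // x ∈ S}, lam.1 (f lam) : ℝ) : ℂ) • Qsub f a : ↥Asub) :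
        Matrix (Fin d) (Fin d) ℂ)
        = ((∏ lam : {x // x ∈ S}, lam.1 (f lam) : ℝ)) • ((Qsub f a : ↥Asub) : Matrix (Fin d) (Fin d) ℂ) := by
      intro f
      rw [Subalgebra.coe_smul]
      rw [← Complex.coe_algebraMap, algebraMap_smul]
    rw [Finset.sum_congr rfl (fun f _ => hsmul f)] at hval
    have := Equiv.sum_comp e (fun f : ι =>
      ((∏ lam : {x // x ∈ S}, lam.1 (f lam) : ℝ)) • ((Qsub f a : ↥Asub) : Matrix (Fin d) (Fin d) ℂ))
    rw [← this] at hval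
    exact hval.symm
  · intro M hM i a
    have hcomm : ∀ x ∈ Asub, Commute M x := by
      intro x hx
      induction hx using Algebra.adjoin_induction with
      | mem x hx => obtain ⟨b, rfl⟩ := hx; exact hM b
      | algebraMap r => exact (Algebra.commutes r M).symm
      | add x y _ _ hx hy => exact hx.add_right hy
      | mul x y _ _ hx hy => exact hx.mul_right hy
    exact hcomm _ (Qsub (e i) a).2
end
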